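/- Let G = (V, E) be a finite connected simple graph of diameter at most 2, and let P be a set of k pairwise disjoint unordered pairs of vertices of G (no vertex belongs to two pairs). Then there exist matchings M_1, …, M_m of G with m ≤ 3k such that every pair in P is served by the sequence M_1, …, M_m and the composition (in order) of all the associated swap permutations is the identity permutation of V. -/

import Mathlib

/-- A routing round on `G`: the swap permutation of a matching of `G`, i.e. an involution
of the vertices that moves vertices only along edges of `G`. -/
def isRound {V : Type*} (G : SimpleGraph V) (σ : Equiv.Perm V) : Prop :=
  σ * σ = 1 ∧ ∀ v : V, σ v ≠ v → G.Adj v (σ v)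

/-- Composition, in order, of a list of round permutations: for `L = [σ₁, …, σₘ]`,
`rComp L = σₘ ∘ ⋯ ∘ σ₁`. -/
def rComp {V : Type*} (L : List (Equiv.Perm V)) : Equiv.Perm V :=
  L.foldl (fun p σ => σ * p) 1

/-- `rt(G, π)`: the minimum number of routing rounds (matchings of `G`) whose swap
permutations, composed in order, realize the permutation `π`. -/
noncomputable def rtP {V : Type*} (G : SimpleGraph V) (π : Equiv.Perm V) : ℕ :=
  sInf {m | ∃ L : List (Equiv.Perm V), L.length = m ∧ (∀ σ ∈ L, isRound G σ) ∧ rComp L = π}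

/-- `rt(G)`: the routing number of `G`, the maximum of `rt(G, π)` over all permutations. -/
noncomputable def rt {V : Type*} [Fintype V] [DecidableEq V] (G : SimpleGraph V) : ℕ :=
  Finset.univ.sup (rtP G)

/-- The position permutation after `t` rounds of the sequence `L`: `π_t = σ_t ∘ ⋯ ∘ σ_1`. -/
def rPos {V : Type*} (L : List (Equiv.Perm V)) (t : ℕ) : Equiv.Perm V :=
  rComp (L.take t)

/-! Every pair `{a, b}` is at distance `1` or `2`. A pair at distance `2`, with common neighbour
`w`, is served by the two rounds `(a w), (a w)`: after the first one the pebble of `a` sits on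
`w`, next to `b`, and the second one undoes it. Concatenating these identity-composing blocks,
one per pair, serves every pair with at most `2k` rounds. -/

section Routing

variable {V : Type*}

lemma foldl_mul_eq_rComp_mul (L : List (Equiv.Perm V)) (a : Equiv.Perm V) :
    L.foldl (fun p σ => σ * p) a = rComp L * a := by
  induction L generalizing a with
  | nil => simp [rComp]
  | cons σ L ih =>
    simp only [rComp, List.foldl_cons]
    rw [ih (σ * a), ih (σ * 1)]
    group

lemma rComp_append (L₁ L₂ : List (Equiv.Perm V)) :
    rComp (L₁ ++ L₂) = rComp L₂ * rComp L₁ := by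
  unfold rComp
  rw [List.foldl_append, foldl_mul_eq_rComp_mul]
  rfl

lemma rComp_singleton (σ : Equiv.Perm V) : rComp [σ] = σ := by
  simp [rComp]

lemma rPos_append_of_le_length {L₁ : List (Equiv.Perm V)} {t : ℕ} (ht : t ≤ L₁.length)
    (L₂ : List (Equiv.Perm V)) : rPos (L₁ ++ L₂) t = rPos L₁ t := by
  rw [rPos, rPos, List.take_append_of_le_length ht]

lemma rPos_append_length_add (L₁ L₂ : List (Equiv.Perm V)) (t : ℕ) :
    rPos (L₁ ++ L₂) (L₁.length + t) = rPos L₂ t * rComp L₁ := by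
  rw [rPos, rPos, List.take_length_add_append, rComp_append]

lemma isRound_swap [DecidableEq V] {G : SimpleGraph V} {a b : V} (h : G.Adj a b) :
    isRound G (Equiv.swap a b) := by
  refine ⟨Equiv.swap_mul_self a b, fun x hx => ?_⟩
  rcases eq_or_ne x a with rfl | hxa
  · rwa [Equiv.swap_apply_left]
  rcases eq_or_ne x b with rfl | hxb
  · rw [Equiv.swap_apply_right]; exact h.symm
  · exact absurd (Equiv.swap_apply_of_ne_of_ne hxa hxb) hx

def Serves (G : SimpleGraph V) (L : List (Equiv.Perm V)) (a b : V) : Prop :=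
  ∃ t ≤ L.length, G.Adj (rPos L t a) (rPos L t b)

variable {G : SimpleGraph V}

lemma Serves.append_right {L₁ : List (Equiv.Perm V)} {a b : V} (h : Serves G L₁ a b)
    (L₂ : List (Equiv.Perm V)) : Serves G (L₁ ++ L₂) a b := by
  obtain ⟨t, ht, hadj⟩ := h
  refine ⟨t, by simp only [List.length_append]; omega, ?_⟩
  rwa [rPos_append_of_le_length ht]

lemma Serves.append_left {L₂ : List (Equiv.Perm V)} {a b : V} (h : Serves G L₂ a b)
    {L₁ : List (Equiv.Perm V)} (hL₁ : rComp L₁ = 1) : Serves G (L₁ ++ L₂) a b := by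
  obtain ⟨t, ht, hadj⟩ := h
  refine ⟨L₁.length + t, by simp only [List.length_append]; omega, ?_⟩
  rwa [rPos_append_length_add, hL₁, mul_one]

lemma serves_nil_of_adj {a b : V} (h : G.Adj a b) : Serves G [] a b :=
  ⟨0, le_rfl, h⟩

lemma serves_swap_swap [DecidableEq V] {a w b : V} (hab : a ≠ b) (hwb : G.Adj w b) :
    Serves G [Equiv.swap a w, Equiv.swap a w] a b := by
  refine ⟨1, by simp, ?_⟩
  have hpos : rPos [Equiv.swap a w, Equiv.swap a w] 1 = Equiv.swap a w := rComp_singleton _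
  rwa [hpos, Equiv.swap_apply_left, Equiv.swap_apply_of_ne_of_ne hab.symm hwb.ne.symm]

lemma SimpleGraph.Walk.adj_or_exists_adj_adj_of_length_le_two {x y : V} (p : G.Walk x y)
    (hp : p.length ≤ 2) (hxy : x ≠ y) : G.Adj x y ∨ ∃ w, G.Adj x w ∧ G.Adj w y := by
  match p with
  | .nil => exact absurd rfl hxy
  | .cons h .nil => exact Or.inl h
  | .cons h (.cons h' .nil) => exact Or.inr ⟨_, h, h'⟩
  | .cons _ (.cons _ (.cons _ _)) => simp [SimpleGraph.Walk.length_cons] at hp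

lemma exists_rounds_serves_of_dist_le_two [DecidableEq V] {a b : V} (hab : a ≠ b)
    (p : G.Walk a b) (hp : p.length ≤ 2) :
    ∃ L : List (Equiv.Perm V), (∀ σ ∈ L, isRound G σ) ∧ L.length ≤ 2 ∧ rComp L = 1 ∧
      Serves G L a b := by
  rcases p.adj_or_exists_adj_adj_of_length_le_two hp hab with hadj | ⟨w, haw, hwb⟩
  · exact ⟨[], by simp, by simp, rfl, serves_nil_of_adj hadj⟩
  · refine ⟨[Equiv.swap a w, Equiv.swap a w], ?_, by simp, ?_, serves_swap_swap hab hwb⟩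
    · simp only [List.mem_cons, List.not_mem_nil, or_false, or_self]
      rintro σ rfl
      exact isRound_swap haw
    · simp [rComp]

lemma exists_rounds_serves_of_diam_le_two [DecidableEq V]
    (hdiam : ∀ x y : V, ∃ p : G.Walk x y, p.length ≤ 2) (P : List (V × V))
    (hP : ∀ q ∈ P, q.1 ≠ q.2) :
    ∃ L : List (Equiv.Perm V), (∀ σ ∈ L, isRound G σ) ∧ L.length ≤ 2 * P.length ∧
      rComp L = 1 ∧ ∀ q ∈ P, Serves G L q.1 q.2 := by
  induction P with
  | nil => exact ⟨[], by simp, by simp, rfl, by simp⟩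
  | cons q P ih =>
    obtain ⟨L, hL, hlen, hcomp, hserves⟩ := ih fun r hr => hP r (List.mem_cons_of_mem q hr)
    obtain ⟨p, hp⟩ := hdiam q.1 q.2
    obtain ⟨B, hB, hBlen, hBcomp, hBserves⟩ :=
      exists_rounds_serves_of_dist_le_two (hP q List.mem_cons_self) p hp
    refine ⟨B ++ L, ?_, ?_, ?_, ?_⟩
    · intro σ hσ
      rcases List.mem_append.1 hσ with hσ | hσ
      exacts [hB σ hσ, hL σ hσ]
    · simp only [List.length_append, List.length_cons]
      omega
    · rw [rComp_append, hcomp, hBcomp, mul_one]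
    · rintro r (_ | ⟨_, hr⟩)
      exacts [hBserves.append_right L, (hserves r hr).append_left hBcomp]

end Routing

theorem serve_pairs_of_diam_le_two_general
    {V : Type*} [DecidableEq V] (G : SimpleGraph V)
    (hdiam : ∀ x y : V, ∃ p : G.Walk x y, p.length ≤ 2)
    (k : ℕ) (u v : Fin k → V)
    (hinj : Function.Injective (Sum.elim u v : Fin k ⊕ Fin k → V)) :
    ∃ L : List (Equiv.Perm V),
      (∀ σ ∈ L, isRound G σ) ∧
      L.length ≤ 3 * k ∧
      rComp L = 1 ∧
      ∀ i : Fin k, ∃ t ≤ L.length, G.Adj (rPos L t (u i)) (rPos L t (v i)) := by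
  have hne : ∀ q ∈ List.ofFn (fun i => (u i, v i)), q.1 ≠ q.2 := by
    simp only [List.mem_ofFn, forall_exists_index]
    rintro _ i rfl h
    exact Sum.inl_ne_inr (hinj h)
  obtain ⟨L, hL, hlen, hcomp, hserves⟩ := exists_rounds_serves_of_diam_le_two hdiam _ hne
  refine ⟨L, hL, ?_, hcomp, fun i => hserves (u i, v i) (List.mem_ofFn.2 ⟨i, rfl⟩)⟩
  rw [List.length_ofFn] at hlen
  omega

/-- In a finite connected graph of diameter at most `2` (any two vertices are joined by a
walk of length at most `2`), any `k` pairwise disjoint pairs `{u i, v i}` of vertices (all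
`2k` vertices distinct) can be served by a sequence of at most `3 * k` matchings whose swap
permutations compose (in order) to the identity. -/
theorem serve_pairs_of_diam_le_two
    {V : Type*} [Fintype V] [DecidableEq V] (G : SimpleGraph V) (hG : G.Connected)
    (hdiam : ∀ x y : V, ∃ p : G.Walk x y, p.length ≤ 2)
    (k : ℕ) (u v : Fin k → V)
    (hinj : Function.Injective (Sum.elim u v : Fin k ⊕ Fin k → V)) :
    ∃ L : List (Equiv.Perm V),
      (∀ σ ∈ L, isRound G σ) ∧
      L.length ≤ 3 * k ∧
      rComp L = 1 ∧
      ∀ i : Fin k, ∃ t ≤ L.length, G.Adj (rPos L t (u i)) (rPos L t (v i)) :=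
  serve_pairs_of_diam_le_two_general G hdiam k u v hinj
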